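/- arXiv:1111.1177 — 4 statements merged into one kernel-verified Lean document; each statement's English description precedes it below -/
import Mathlib

section
/- Let μ be a probability measure on S, ε ∈ (0,1), i ∈ ℤ², and λ ∈ [0,1]. If the conditional probability satisfies μ(X_i = +1 | F_{ℤ²∖{i}}) ≥ λ μ-almost surely, then for every event B ∈ F_{ℤ²∖{i}} one has P^ε({X_i = +1} ∩ B) ≥ (1−ε)·λ·P^ε(B); in particular P^ε(X_i = +1 | F_{ℤ²∖{i}}) ≥ (1−ε)·λ holds P^ε-almost surely. -/
open MeasureTheory

/-- Sites of the lattice `ℤ²`. -/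
abbrev Site : Type := ℤ × ℤ

/-- Configuration space `S = {-1,+1}^{ℤ²}`, where `false` encodes `-1` and `true` encodes `+1`
(so that the order `false < true` corresponds to `-1 < +1`). -/
abbrev Conf : Type := Site → Bool

noncomputable section

/-- `ν` is the Bernoulli product measure on `S` under which the coordinates are i.i.d. with
`ν(X_i = -1) = ε` and `ν(X_i = +1) = 1 - ε`: we characterize it through its values on
cylinder sets. -/
def IsBernoulliProduct (ν : Measure Conf) (ε : ℝ) : Prop :=
  ∀ (Λ : Finset Site) (η : Site → Bool),
    ν {x | ∀ i ∈ Λ, x i = η i} =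
      ∏ i ∈ Λ, ENNReal.ofReal (if η i = true then 1 - ε else ε)

/-- The pointwise minimum map `(x¹, x²) ↦ (i ↦ x¹_i ∧ x²_i)`. -/
def minMap (p : Conf × Conf) : Conf := fun i => p.1 i && p.2 i

/-- The partially observed field `P^ε`: the pushforward of `μ ⊗ ν` under the pointwise
minimum map. -/
def Pe (μ ν : Measure Conf) : Measure Conf := (μ.prod ν).map minMap

open Set
open scoped ENNReal

namespace Stmt2Aux

def cyl (Λ : Finset Site) (η : Site → Bool) : Set Conf := {x | ∀ j ∈ Λ, x j = η j}

lemma measurableSet_cyl_of (Δ : Set Site) (Λ : Finset Site) (hΛ : ↑Λ ⊆ Δ) (η : Site → Bool) :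
    MeasurableSet[MeasureTheory.cylinderEvents Δ] (cyl Λ η) := by
  have h : cyl Λ η = ⋂ j ∈ Λ, {x : Conf | x j = η j} := by ext x; simp [cyl]
  rw [h]
  refine MeasurableSet.biInter Λ.countable_toSet fun j hj => ?_
  have hmeas : Measurable[MeasureTheory.cylinderEvents Δ] fun x : Conf => x j :=
    MeasureTheory.measurable_cylinderEvent_apply (hΛ hj)
  have h2 : {x : Conf | x j = η j} = (fun x : Conf => x j) ⁻¹' {η j} := by ext; simp
  rw [h2]; exact hmeas (measurableSet_singleton _)

def cylSets (Δ : Set Site) : Set (Set Conf) :=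
  {S | ∃ (Λ : Finset Site) (η : Site → Bool), ↑Λ ⊆ Δ ∧ S = cyl Λ η}

lemma cylinderEvents_eq_generateFrom (Δ : Set Site) :
    MeasureTheory.cylinderEvents (X := fun _ : Site => Bool) Δ
      = MeasurableSpace.generateFrom (cylSets Δ) := by
  apply le_antisymm
  · rw [MeasureTheory.cylinderEvents]
    refine iSup₂_le fun j hj => ?_
    intro s hs
    obtain ⟨s', -, rfl⟩ := MeasurableSpace.measurableSet_comap.mp hs
    have h : (fun x : Conf => x j) ⁻¹' s' = ⋃ b ∈ s', (fun x : Conf => x j) ⁻¹' {b} := by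
      ext x; simp
    rw [h]
    refine MeasurableSet.biUnion s'.to_countable fun b _ => ?_
    have h2 : (fun x : Conf => x j) ⁻¹' {b} = cyl {j} (fun _ => b) := by
      ext x; simp [cyl]
    rw [h2]
    exact MeasurableSpace.measurableSet_generateFrom ⟨{j}, fun _ => b, by simpa using hj, rfl⟩
  · exact MeasurableSpace.generateFrom_le fun S hS => by
      obtain ⟨Λ, η, hΛ, rfl⟩ := hS
      exact measurableSet_cyl_of Δ Λ hΛ η

lemma isPiSystem_cylSets (Δ : Set Site) : IsPiSystem (cylSets Δ) := by
  classical
  rintro S ⟨Λ₁, η₁, h1, rfl⟩ T ⟨Λ₂, η₂, h2, rfl⟩ hne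
  obtain ⟨z, hz1, hz2⟩ := hne
  refine ⟨Λ₁ ∪ Λ₂, fun j => if j ∈ Λ₁ then η₁ j else η₂ j, ?_, ?_⟩
  · rw [Finset.coe_union]; exact Set.union_subset h1 h2
  · ext x
    simp only [cyl, Set.mem_inter_iff, Set.mem_setOf_eq, Finset.mem_union]
    constructor
    · rintro ⟨ha, hb⟩ j hj
      by_cases hj1 : j ∈ Λ₁
      · simp [hj1, ha j hj1]
      · rcases hj with h | h
        · exact absurd h hj1
        · simp [hj1, hb j h]
    · intro h
      constructor
      · intro j hj
        have := h j (Or.inl hj); rwa [if_pos hj] at this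
      · intro j hj
        by_cases hj1 : j ∈ Λ₁
        · have := h j (Or.inl hj1); rw [if_pos hj1] at this
          have e : η₁ j = η₂ j := by rw [← hz1 j hj1, hz2 j hj]
          rw [this, e]
        · have := h j (Or.inr hj); rwa [if_neg hj1] at this


lemma nu_inter (ν : Measure Conf) [IsProbabilityMeasure ν] (ε : ℝ) (hε1 : ε < 1)
    (hν : IsBernoulliProduct ν ε) (i : Site) :
    ∀ D : Set Conf, MeasurableSet[MeasureTheory.cylinderEvents {i}ᶜ] D →
      ν ({y : Conf | y i = true} ∩ D) = ENNReal.ofReal (1 - ε) * ν D := by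
  classical
  have hm : MeasureTheory.cylinderEvents (X := fun _ : Site => Bool) {i}ᶜ ≤ MeasurableSpace.pi :=
    MeasureTheory.cylinderEvents_le_pi
  have hSmeas : MeasurableSet {y : Conf | y i = true} := by
    have h : {y : Conf | y i = true} = (fun y : Conf => y i) ⁻¹' {true} := by ext; simp
    rw [h]; exact measurable_pi_apply i (measurableSet_singleton _)
  have hSi : ν {y : Conf | y i = true} = ENNReal.ofReal (1 - ε) := by
    have h := hν {i} (fun _ => true)
    simpa using h
  refine MeasurableSpace.induction_on_inter (m := MeasureTheory.cylinderEvents {i}ᶜ)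
    (cylinderEvents_eq_generateFrom _) (isPiSystem_cylSets _) (by simp) ?_ ?_ ?_
  · rintro S ⟨Λ, η, hΛ, rfl⟩
    have hiΛ : i ∉ Λ := fun h => (hΛ h) rfl
    have hset : {y : Conf | y i = true} ∩ cyl Λ η
        = cyl (insert i Λ) (Function.update η i true) := by
      ext x
      simp only [cyl, Set.mem_inter_iff, Set.mem_setOf_eq, Finset.mem_insert]
      constructor
      · rintro ⟨hx, hΛx⟩ j hj
        rcases hj with rfl | hj
        · rw [Function.update_self]; exact hx
        · rw [Function.update_of_ne (fun h => hiΛ (by rwa [h] at hj))]; exact hΛx j hj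
      · intro h
        refine ⟨by simpa using h i (Or.inl rfl), fun j hj => ?_⟩
        have := h j (Or.inr hj)
        rwa [Function.update_of_ne (fun h' => hiΛ (by rwa [h'] at hj))] at this
    rw [hset]
    have h1 := hν (insert i Λ) (Function.update η i true)
    have h2 := hν Λ η
    rw [show cyl (insert i Λ) (Function.update η i true)
        = {x : Conf | ∀ j ∈ insert i Λ, x j = Function.update η i true j} from rfl, h1,
      Finset.prod_insert hiΛ, Function.update_self, if_pos rfl]
    rw [show cyl Λ η = {x : Conf | ∀ j ∈ Λ, x j = η j} from rfl, h2]
    congr 1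
    refine Finset.prod_congr rfl fun j hj => ?_
    rw [Function.update_of_ne (fun h' => hiΛ (by rwa [h'] at hj))]
  · intro D hDm hind
    have hD' : MeasurableSet D := hm _ hDm
    have hsub : {y : Conf | y i = true} ∩ D ⊆ {y : Conf | y i = true} := Set.inter_subset_left
    have hdiff : {y : Conf | y i = true} ∩ Dᶜ
        = {y : Conf | y i = true} \ ({y : Conf | y i = true} ∩ D) := by
      ext x; by_cases hx : x ∈ D <;> simp [hx]
    rw [hdiff, measure_diff hsub (hSmeas.inter hD').nullMeasurableSet (measure_ne_top _ _),
      hSi, hind, measure_compl hD' (measure_ne_top _ _), measure_univ]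
    have hb1 : ν D ≤ 1 := prob_le_one
    have key : ENNReal.ofReal (1 - ε) * (1 - ν D) + ENNReal.ofReal (1 - ε) * ν D
        = ENNReal.ofReal (1 - ε) := by
      rw [← mul_add, tsub_add_cancel_of_le hb1, mul_one]
    exact ENNReal.sub_eq_of_eq_add (by finiteness) key.symm
  · intro f hdisj hmeas hind
    have hmeas' : ∀ n, MeasurableSet ({y : Conf | y i = true} ∩ f n) :=
      fun n => hSmeas.inter (hm _ (hmeas n))
    rw [Set.inter_iUnion,
      measure_iUnion (fun a b hab => ((hdisj hab).inter_left' _).inter_right' _) hmeas',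
      measure_iUnion hdisj (fun n => hm _ (hmeas n))]
    rw [tsum_congr hind, ENNReal.tsum_mul_left]


lemma measurableSet_xi (i : Site) : MeasurableSet {y : Conf | y i = true} := by
  have h : {y : Conf | y i = true} = (fun y : Conf => y i) ⁻¹' {true} := by ext; simp
  rw [h]; exact measurable_pi_apply i (measurableSet_singleton _)

lemma mu_inter (μ : Measure Conf) [IsProbabilityMeasure μ] (i : Site) (lam : ℝ)
    (hlam0 : 0 ≤ lam)
    (hcond : ∀ᵐ x ∂μ,
      lam ≤ (μ[Set.indicator {y | y i = true} (fun _ => (1 : ℝ)) |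
        MeasureTheory.cylinderEvents {i}ᶜ]) x)
    (C : Set Conf) (hC : MeasurableSet[MeasureTheory.cylinderEvents {i}ᶜ] C) :
    ENNReal.ofReal lam * μ C ≤ μ ({x : Conf | x i = true} ∩ C) := by
  have hm : MeasureTheory.cylinderEvents (X := fun _ : Site => Bool) {i}ᶜ ≤ MeasurableSpace.pi :=
    MeasureTheory.cylinderEvents_le_pi
  haveI : IsFiniteMeasure (μ.trim hm) := isFiniteMeasure_trim hm
  have hC' : MeasurableSet C := hm _ hC
  set f : Conf → ℝ := Set.indicator {y | y i = true} (fun _ => (1 : ℝ)) with hf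
  have hfint : Integrable f μ :=
    (integrable_const (1 : ℝ)).indicator (measurableSet_xi i)
  have h1 : ∫ x in C, (μ[f | MeasureTheory.cylinderEvents {i}ᶜ]) x ∂μ = ∫ x in C, f x ∂μ :=
    setIntegral_condExp hm hfint hC
  have h2 : ∫ x in C, f x ∂μ = (μ ({x : Conf | x i = true} ∩ C)).toReal := by
    rw [hf, setIntegral_indicator (measurableSet_xi i)]
    simp [Measure.restrict_apply (measurableSet_xi i), Set.inter_comm, measureReal_def]
  have h3 : lam * (μ C).toReal ≤ ∫ x in C, (μ[f | MeasureTheory.cylinderEvents {i}ᶜ]) x ∂μ := by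
    have hle : ∫ x in C, lam ∂μ ≤ ∫ x in C, (μ[f | MeasureTheory.cylinderEvents {i}ᶜ]) x ∂μ := by
      refine setIntegral_mono_ae (integrable_const lam).integrableOn
        integrable_condExp.integrableOn ?_
      exact hcond
    rwa [setIntegral_const, smul_eq_mul, mul_comm] at hle
  have h4 : lam * (μ C).toReal ≤ (μ ({x : Conf | x i = true} ∩ C)).toReal := by
    rw [← h2, ← h1]; exact h3
  calc ENNReal.ofReal lam * μ C = ENNReal.ofReal (lam * (μ C).toReal) := by
        rw [ENNReal.ofReal_mul hlam0, ENNReal.ofReal_toReal (measure_ne_top _ _)]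
    _ ≤ ENNReal.ofReal ((μ ({x : Conf | x i = true} ∩ C)).toReal) := ENNReal.ofReal_le_ofReal h4
    _ = μ ({x : Conf | x i = true} ∩ C) := ENNReal.ofReal_toReal (measure_ne_top _ _)


lemma meas_measure_section {α β : Type*} {mα : MeasurableSpace α} {mβ : MeasurableSpace β}
    (μ : Measure α) [SFinite μ] {s : Set (α × β)} (hs : MeasurableSet s) :
    Measurable fun y => μ ((fun x => (x, y)) ⁻¹' s) :=
  measurable_measure_prodMk_right hs

lemma measurable_minMap : Measurable minMap := by
  refine measurable_pi_lambda _ fun j => ?_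
  have h1 : Measurable fun p : Conf × Conf => (p.1 j, p.2 j) :=
    ((measurable_pi_apply j).comp measurable_fst).prodMk
      ((measurable_pi_apply j).comp measurable_snd)
  exact (measurable_of_countable (fun q : Bool × Bool => q.1 && q.2)).comp h1

lemma minMap_meas_cyl (i : Site) :
    @Measurable (Conf × Conf) Conf
      (MeasurableSpace.prod (MeasureTheory.cylinderEvents {i}ᶜ) (MeasureTheory.cylinderEvents {i}ᶜ))
      (MeasureTheory.cylinderEvents {i}ᶜ) minMap := by
  have mC : MeasurableSpace Conf := MeasureTheory.cylinderEvents {i}ᶜ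
  refine (@MeasureTheory.measurable_cylinderEvents_iff (Conf × Conf) Site (fun _ => Bool)
    (MeasurableSpace.prod (MeasureTheory.cylinderEvents {i}ᶜ) (MeasureTheory.cylinderEvents {i}ᶜ))
    (fun _ => inferInstance) {i}ᶜ minMap).2 fun j hj => ?_
  have hj1 : @Measurable Conf Bool (MeasureTheory.cylinderEvents {i}ᶜ) _ (fun x : Conf => x j) :=
    MeasureTheory.measurable_cylinderEvent_apply hj
  have hfst : @Measurable (Conf × Conf) Conf
      (MeasurableSpace.prod (MeasureTheory.cylinderEvents {i}ᶜ) (MeasureTheory.cylinderEvents {i}ᶜ))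
      (MeasureTheory.cylinderEvents {i}ᶜ) Prod.fst :=
    @measurable_fst Conf Conf (MeasureTheory.cylinderEvents {i}ᶜ) (MeasureTheory.cylinderEvents {i}ᶜ)
  have hsnd : @Measurable (Conf × Conf) Conf
      (MeasurableSpace.prod (MeasureTheory.cylinderEvents {i}ᶜ) (MeasureTheory.cylinderEvents {i}ᶜ))
      (MeasureTheory.cylinderEvents {i}ᶜ) Prod.snd :=
    @measurable_snd Conf Conf (MeasureTheory.cylinderEvents {i}ᶜ) (MeasureTheory.cylinderEvents {i}ᶜ)
  have h1 : @Measurable (Conf × Conf) (Bool × Bool)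
      (MeasurableSpace.prod (MeasureTheory.cylinderEvents {i}ᶜ) (MeasureTheory.cylinderEvents {i}ᶜ))
      _ (fun p : Conf × Conf => (p.1 j, p.2 j)) :=
    Measurable.prodMk (hj1.comp hfst) (hj1.comp hsnd)
  exact (measurable_of_countable (fun q : Bool × Bool => q.1 && q.2)).comp h1

lemma part1 (μ ν : Measure Conf) [IsProbabilityMeasure μ] [IsProbabilityMeasure ν]
    (ε : ℝ) (hε1 : ε < 1) (hν : IsBernoulliProduct ν ε)
    (i : Site) (lam : ℝ) (hlam0 : 0 ≤ lam)
    (hcond : ∀ᵐ x ∂μ,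
      lam ≤ (μ[Set.indicator {y | y i = true} (fun _ => (1 : ℝ)) |
        MeasureTheory.cylinderEvents {i}ᶜ]) x) :
    ∀ B : Set Conf, MeasurableSet[MeasureTheory.cylinderEvents {i}ᶜ] B →
      ENNReal.ofReal ((1 - ε) * lam) * Pe μ ν B ≤ Pe μ ν ({x : Conf | x i = true} ∩ B) := by
  intro B hB
  have hm : MeasureTheory.cylinderEvents (X := fun _ : Site => Bool) {i}ᶜ ≤ MeasurableSpace.pi :=
    MeasureTheory.cylinderEvents_le_pi
  haveI : IsFiniteMeasure (μ.trim hm) := isFiniteMeasure_trim hm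
  have hB' : MeasurableSet B := hm _ hB
  have hmin : Measurable minMap := measurable_minMap
  set T : Set (Conf × Conf) := minMap ⁻¹' B with hT
  have hTm : MeasurableSet[MeasurableSpace.prod (MeasureTheory.cylinderEvents {i}ᶜ)
      (MeasureTheory.cylinderEvents {i}ᶜ)] T := minMap_meas_cyl i hB
  have hsec : ∀ y : Conf, MeasurableSet[MeasureTheory.cylinderEvents {i}ᶜ]
      ((fun x => (x, y)) ⁻¹' T) := fun y =>
    (@measurable_prodMk_right Conf Conf (MeasureTheory.cylinderEvents {i}ᶜ)
      (MeasureTheory.cylinderEvents {i}ᶜ) y) hTm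
  set G : Conf → ℝ≥0∞ := fun y => μ ((fun x => (x, y)) ⁻¹' T) with hG
  have hGmeas : @Measurable Conf ℝ≥0∞ (MeasureTheory.cylinderEvents {i}ᶜ) _ G := by
    have h := meas_measure_section (mα := MeasureTheory.cylinderEvents {i}ᶜ)
      (mβ := MeasureTheory.cylinderEvents {i}ᶜ) (μ.trim hm) hTm
    have heq : (fun y => (μ.trim hm) ((fun x => (x, y)) ⁻¹' T)) = G := by
      funext y; rw [hG]; exact trim_measurableSet_eq hm (hsec y)
    rwa [heq] at h
  have key : ∀ A : Set Conf, MeasurableSet A →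
      Pe μ ν A = ∫⁻ y, μ ((fun x => (x, y)) ⁻¹' (minMap ⁻¹' A)) ∂ν := by
    intro A hA
    rw [Pe, Measure.map_apply hmin hA, Measure.prod_apply_symm (hmin hA)]
  set S : Set Conf := {y : Conf | y i = true} with hS
  set F : Conf → ℝ≥0∞ := fun y => μ ({x : Conf | x i = true} ∩ ((fun x => (x, y)) ⁻¹' T)) with hF
  have hpt : (fun y => μ ((fun x => (x, y)) ⁻¹' (minMap ⁻¹' ({x : Conf | x i = true} ∩ B))))
      = S.indicator F := by
    funext y
    by_cases hy : y ∈ S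
    · rw [Set.indicator_of_mem hy, hF]
      congr 1
      ext x
      have hyi : y i = true := hy
      simp [minMap, hT, Bool.and_eq_true, hyi]
    · rw [Set.indicator_of_notMem hy]
      have hyi : ¬ y i = true := hy
      have hempty : ((fun x => (x, y)) ⁻¹' (minMap ⁻¹' ({x : Conf | x i = true} ∩ B))) = ∅ := by
        ext x
        simp [minMap, Bool.and_eq_true, hyi]
      rw [hempty]; simp
  have hres : ∫⁻ y in S, G y ∂ν = ENNReal.ofReal (1 - ε) * ∫⁻ y, G y ∂ν := by
    have htrim_eq : (ν.restrict S).trim hm = (ENNReal.ofReal (1 - ε) • ν).trim hm := by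
      refine @Measure.ext Conf (MeasureTheory.cylinderEvents {i}ᶜ) _ _ (fun s hs => ?_)
      rw [trim_measurableSet_eq hm hs, trim_measurableSet_eq hm hs,
        Measure.restrict_apply (hm _ hs), Measure.smul_apply, smul_eq_mul, Set.inter_comm]
      exact nu_inter ν ε hε1 hν i s hs
    calc ∫⁻ y in S, G y ∂ν = ∫⁻ y, G y ∂((ν.restrict S).trim hm) :=
          (lintegral_trim hm hGmeas).symm
      _ = ∫⁻ y, G y ∂((ENNReal.ofReal (1 - ε) • ν).trim hm) := by rw [htrim_eq]
      _ = ∫⁻ y, G y ∂(ENNReal.ofReal (1 - ε) • ν) := lintegral_trim hm hGmeas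
      _ = ENNReal.ofReal (1 - ε) * ∫⁻ y, G y ∂ν := lintegral_smul_measure _ _
  have hPeB : Pe μ ν B = ∫⁻ y, G y ∂ν := key B hB'
  have hPeSB : Pe μ ν ({x : Conf | x i = true} ∩ B) = ∫⁻ y in S, F y ∂ν := by
    rw [key _ ((measurableSet_xi i).inter hB')]
    rw [hpt]
    exact lintegral_indicator (measurableSet_xi i) F
  have hmono : ∫⁻ y in S, ENNReal.ofReal lam * G y ∂ν ≤ ∫⁻ y in S, F y ∂ν := by
    refine lintegral_mono fun y => ?_
    exact mu_inter μ i lam hlam0 hcond _ (hsec y)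
  calc ENNReal.ofReal ((1 - ε) * lam) * Pe μ ν B
      = ENNReal.ofReal lam * (ENNReal.ofReal (1 - ε) * ∫⁻ y, G y ∂ν) := by
        rw [hPeB, ENNReal.ofReal_mul (by linarith : (0:ℝ) ≤ 1 - ε)]; ring
    _ = ENNReal.ofReal lam * ∫⁻ y in S, G y ∂ν := by rw [hres]
    _ = ∫⁻ y in S, ENNReal.ofReal lam * G y ∂ν :=
        (lintegral_const_mul' _ _ ENNReal.ofReal_ne_top).symm
    _ ≤ ∫⁻ y in S, F y ∂ν := hmono
    _ = Pe μ ν ({x : Conf | x i = true} ∩ B) := hPeSB.symm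

end Stmt2Aux

theorem statement2 (μ ν : Measure Conf) [IsProbabilityMeasure μ] [IsProbabilityMeasure ν]
    (ε : ℝ) (hε0 : 0 < ε) (hε1 : ε < 1) (hν : IsBernoulliProduct ν ε)
    (i : Site) (lam : ℝ) (hlam0 : 0 ≤ lam) (hlam1 : lam ≤ 1)
    (hcond : ∀ᵐ x ∂μ,
      lam ≤ (μ[Set.indicator {y | y i = true} (fun _ => (1 : ℝ)) | MeasureTheory.cylinderEvents {i}ᶜ]) x) :
    (∀ B : Set Conf, MeasurableSet[MeasureTheory.cylinderEvents {i}ᶜ] B →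
        ENNReal.ofReal ((1 - ε) * lam) * Pe μ ν B ≤ Pe μ ν ({x | x i = true} ∩ B)) ∧
      ∀ᵐ x ∂(Pe μ ν),
        (1 - ε) * lam ≤
          ((Pe μ ν)[Set.indicator {y | y i = true} (fun _ => (1 : ℝ)) |
            MeasureTheory.cylinderEvents {i}ᶜ]) x := by
  have hm : MeasureTheory.cylinderEvents (X := fun _ : Site => Bool) {i}ᶜ ≤ MeasurableSpace.pi :=
    MeasureTheory.cylinderEvents_le_pi
  have hpart1 := Stmt2Aux.part1 μ ν ε hε1 hν i lam hlam0 hcond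
  refine ⟨hpart1, ?_⟩
  haveI : IsProbabilityMeasure (Pe μ ν) := by
    rw [Pe]
    exact Measure.isProbabilityMeasure_map Stmt2Aux.measurable_minMap.aemeasurable
  set P := Pe μ ν with hP
  haveI : IsFiniteMeasure (P.trim hm) := isFiniteMeasure_trim hm
  set f : Conf → ℝ := Set.indicator {y | y i = true} (fun _ => (1 : ℝ)) with hf
  have hfint : Integrable f P :=
    (integrable_const (1 : ℝ)).indicator (Stmt2Aux.measurableSet_xi i)
  set g := P[f | MeasureTheory.cylinderEvents {i}ᶜ] with hg
  set c := (1 - ε) * lam with hc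
  have hc0 : 0 ≤ c := mul_nonneg (by linarith) hlam0
  have hkey : ∀ s : Set Conf, MeasurableSet[MeasureTheory.cylinderEvents {i}ᶜ] s →
      c * (P s).toReal ≤ ∫ x in s, g x ∂P := by
    intro s hs
    have h1 : ∫ x in s, g x ∂P = ∫ x in s, f x ∂P := setIntegral_condExp hm hfint hs
    have h2 : ∫ x in s, f x ∂P = (P ({x : Conf | x i = true} ∩ s)).toReal := by
      rw [hf, setIntegral_indicator (Stmt2Aux.measurableSet_xi i)]
      simp [Measure.restrict_apply (Stmt2Aux.measurableSet_xi i), Set.inter_comm, measureReal_def]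
    have h3 := hpart1 s hs
    have h4 : c * (P s).toReal ≤ (P ({x : Conf | x i = true} ∩ s)).toReal := by
      have h5 := ENNReal.toReal_mono (measure_ne_top _ _) h3
      rwa [ENNReal.toReal_mul, ENNReal.toReal_ofReal hc0] at h5
    rw [h1, h2]; exact h4
  set φ : Conf → ℝ := fun x => g x - c with hφ
  have hφsm : StronglyMeasurable[MeasureTheory.cylinderEvents {i}ᶜ] φ :=
    stronglyMeasurable_condExp.sub stronglyMeasurable_const
  have hφint : Integrable φ P := integrable_condExp.sub (integrable_const c)
  have hφtrim : Integrable φ (P.trim hm) := hφint.trim hm hφsm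
  have h0 : 0 ≤ᵐ[P.trim hm] φ := by
    refine ae_nonneg_of_forall_setIntegral_nonneg hφtrim fun s hs hsfin => ?_
    rw [← setIntegral_trim hm hφsm hs]
    have heq : ∫ x in s, φ x ∂P = ∫ x in s, g x ∂P - c * (P s).toReal := by
      rw [hφ, integral_sub integrable_condExp.integrableOn (integrable_const c).integrableOn,
        setIntegral_const, smul_eq_mul, mul_comm]
      rfl
    rw [heq]
    have := hkey s hs
    linarith
  have h0' : (fun _ : Conf => c) ≤ᵐ[P.trim hm] g := by
    filter_upwards [h0] with x hx
    have : (0 : ℝ) ≤ g x - c := hx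
    linarith
  have hfin := ae_le_of_ae_le_trim h0'
  filter_upwards [hfin] with x hx
  exact hx

end
end

section
/- Let μ be a probability measure on S, ε ∈ (0,1), i ∈ ℤ², and λ ∈ [0,1]. If the conditional probability satisfies μ(X_i = −1 | F_{ℤ²∖{i}}) ≥ λ μ-almost surely, then for every event B ∈ F_{ℤ²∖{i}} one has P^ε({X_i = −1} ∩ B) ≥ (ε + (1−ε)·λ)·P^ε(B); in particular P^ε(X_i = −1 | F_{ℤ²∖{i}}) ≥ ε + (1−ε)·λ holds P^ε-almost surely. -/
open MeasureTheory

noncomputable section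

open Set
open scoped ENNReal

/-- Cylinder sets with base in `Δ`. -/
def Cyl (Δ : Set Site) : Set (Set Conf) :=
  {s | ∃ (Λ : Finset Site) (η : Site → Bool), ↑Λ ⊆ Δ ∧ s = {x : Conf | ∀ j ∈ Λ, x j = η j}}

lemma isPiSystem_cyl (Δ : Set Site) : IsPiSystem (Cyl Δ) := by
  rintro s ⟨Λ₁, η₁, hΛ₁, rfl⟩ t ⟨Λ₂, η₂, hΛ₂, rfl⟩ hne
  obtain ⟨x, hx1, hx2⟩ := hne
  classical
  refine ⟨Λ₁ ∪ Λ₂, fun j => if j ∈ Λ₁ then η₁ j else η₂ j, ?_, ?_⟩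
  · simp only [Finset.coe_union, Set.union_subset_iff]; exact ⟨hΛ₁, hΛ₂⟩
  · ext y
    simp only [Set.mem_inter_iff, Set.mem_setOf_eq, Finset.mem_union]
    constructor
    · rintro ⟨h1, h2⟩ j hj
      by_cases hj1 : j ∈ Λ₁
      · simp [hj1, h1 j hj1]
      · rcases hj with hj' | hj2 
        · exact absurd hj' hj1
        · simp [hj1, h2 j hj2]
    · intro h
      constructor
      · intro j hj; have := h j (Or.inl hj); simpa [hj] using this
      · intro j hj
        have := h j (Or.inr hj)
        by_cases hj1 : j ∈ Λ₁
        · rw [if_pos hj1] at this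
          rw [this]
          rw [← hx1 j hj1, hx2 j hj]
        · simpa [hj1] using this

lemma cylinderEvents_eq_generateFrom (Δ : Set Site) :
    (MeasureTheory.cylinderEvents (X := fun _ : Site => Bool) Δ) =
      MeasurableSpace.generateFrom (Cyl Δ) := by
  apply le_antisymm
  · unfold MeasureTheory.cylinderEvents
    refine iSup₂_le fun j hj => ?_
    rw [← measurable_iff_comap_le]
    letI : MeasurableSpace Conf := MeasurableSpace.generateFrom (Cyl Δ)
    refine measurable_to_countable' fun b => ?_
    refine MeasurableSpace.measurableSet_generateFrom ?_
    refine ⟨{j}, fun _ => b, by simpa using hj, ?_⟩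
    ext x
    simp
  · refine MeasurableSpace.generateFrom_le ?_
    rintro s ⟨Λ, η, hΛ, rfl⟩
    have : {x : Conf | ∀ j ∈ Λ, x j = η j} = ⋂ j ∈ Λ, (fun x : Conf => x j) ⁻¹' {η j} := by
      ext x; simp
    rw [this]
    refine MeasurableSet.biInter Λ.countable_toSet fun j hj => ?_
    exact MeasureTheory.measurable_cylinderEvent_apply (X := fun _ : Site => Bool) (hΛ hj) (measurableSet_singleton (η j))


section Bern
variable {ν : Measure Conf} {ε : ℝ} {i : Site}

variable {ν : Measure Conf} {ε : ℝ} {i : Site}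

lemma measurableSet_coord (i : Site) (b : Bool) : MeasurableSet {x : Conf | x i = b} := by
  have : {x : Conf | x i = b} = (fun x : Conf => x i) ⁻¹' {b} := by ext x; simp
  rw [this]
  exact measurable_pi_apply i (measurableSet_singleton b)

lemma nu_coord [IsProbabilityMeasure ν] (hν : IsBernoulliProduct ν ε) (b : Bool) :
    ν {x : Conf | x i = b} = ENNReal.ofReal (if b = true then 1 - ε else ε) := by
  have h := hν {i} (fun _ => b)
  simpa using h

lemma nu_inter_cyl [IsProbabilityMeasure ν] (hν : IsBernoulliProduct ν ε) (b : Bool)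
    {D : Set Conf} (hD : MeasurableSet[MeasureTheory.cylinderEvents ({i}ᶜ : Set Site)] D) :
    ν ({x : Conf | x i = b} ∩ D) = ENNReal.ofReal (if b = true then 1 - ε else ε) * ν D := by
  classical
  set c : ENNReal := ENNReal.ofReal (if b = true then 1 - ε else ε) with hc
  have hle : MeasureTheory.cylinderEvents ({i}ᶜ : Set Site) ≤ (inferInstance : MeasurableSpace Conf) :=
    MeasureTheory.cylinderEvents_le_pi
  have hνs : ν {x : Conf | x i = b} = c := nu_coord hν b
  refine MeasurableSpace.induction_on_inter
    (m := MeasureTheory.cylinderEvents ({i}ᶜ : Set Site))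
    (C := fun D _ => ν ({x : Conf | x i = b} ∩ D) = c * ν D) (s := Cyl {i}ᶜ)
    (cylinderEvents_eq_generateFrom _) (isPiSystem_cyl _) (by simp) ?_ ?_ ?_ _ hD
  · rintro t ⟨Λ, η, hΛ, rfl⟩
    have hiΛ : i ∉ Λ := fun h => by simpa using hΛ h
    have hset : {x : Conf | x i = b} ∩ {x : Conf | ∀ j ∈ Λ, x j = η j}
        = {x : Conf | ∀ j ∈ insert i Λ, x j = Function.update η i b j} := by
      ext x
      simp only [Set.mem_inter_iff, Set.mem_setOf_eq, Finset.mem_insert]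
      constructor
      · rintro ⟨h1, h2⟩ j hj
        rcases hj with rfl | hj
        · simpa using h1
        · rw [Function.update_of_ne (by rintro rfl; exact hiΛ hj)]
          exact h2 j hj
      · intro h
        refine ⟨by simpa using h i (Or.inl rfl), fun j hj => ?_⟩
        have := h j (Or.inr hj)
        rwa [Function.update_of_ne (by rintro rfl; exact hiΛ hj)] at this
    rw [hset, hν, Finset.prod_insert hiΛ, Function.update_self, hν, hc]
    congr 1
    refine Finset.prod_congr rfl fun j hj => ?_
    rw [Function.update_of_ne (by rintro rfl; exact hiΛ hj)]
  · intro t ht hC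
    have ht' : MeasurableSet t := hle _ ht
    have hdiff : {x : Conf | x i = b} \ t = {x : Conf | x i = b} ∩ tᶜ := Set.diff_eq _ _
    have hL : ν ({x : Conf | x i = b} ∩ tᶜ) + ν ({x : Conf | x i = b} ∩ t) = c := by
      rw [← hdiff, add_comm, measure_inter_add_diff _ ht', hνs]
    have hR : c * ν tᶜ + c * ν t = c := by
      rw [← mul_add, add_comm (ν tᶜ) (ν t), measure_add_measure_compl ht', measure_univ, mul_one]
    have hkey := hL.trans hR.symm
    rw [hC] at hkey
    exact WithTop.add_right_cancel
      (ENNReal.mul_ne_top ENNReal.ofReal_ne_top (measure_ne_top ν t)) hkey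
  · intro f hdisj hmeas hC
    rw [Set.inter_iUnion,
      measure_iUnion (fun m n hmn =>
          ((hdisj hmn).mono Set.inter_subset_right Set.inter_subset_right))
        (fun n => (measurableSet_coord i b).inter (hle _ (hmeas n))),
      measure_iUnion hdisj (fun n => hle _ (hmeas n))]
    calc ∑' n, ν ({x : Conf | x i = b} ∩ f n) = ∑' n, c * ν (f n) := tsum_congr hC
      _ = c * ∑' n, ν (f n) := ENNReal.tsum_mul_left

end Bern

lemma measurable_minMap : Measurable minMap := by
  apply measurable_pi_lambda
  intro j
  have h1 : Measurable fun p : Conf × Conf => p.1 j := (measurable_pi_apply j).comp measurable_fst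
  have h2 : Measurable fun p : Conf × Conf => p.2 j := (measurable_pi_apply j).comp measurable_snd
  exact (measurable_of_countable (fun q : Bool × Bool => q.1 && q.2)).comp (h1.prodMk h2)

lemma measurable_minMap_F (i : Site) :
    @Measurable (Conf × Conf) Conf
      ((MeasureTheory.cylinderEvents ({i}ᶜ : Set Site)).prod
        (MeasureTheory.cylinderEvents ({i}ᶜ : Set Site)))
      (MeasureTheory.cylinderEvents ({i}ᶜ : Set Site)) minMap := by
  letI : MeasurableSpace (Conf × Conf) :=
    (MeasureTheory.cylinderEvents ({i}ᶜ : Set Site)).prod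
      (MeasureTheory.cylinderEvents ({i}ᶜ : Set Site))
  rw [MeasureTheory.measurable_cylinderEvents_iff]
  intro j hj
  have h1 : Measurable fun p : Conf × Conf => p.1 j :=
    (MeasureTheory.measurable_cylinderEvent_apply hj).comp measurable_fst
  have h2 : Measurable fun p : Conf × Conf => p.2 j :=
    (MeasureTheory.measurable_cylinderEvent_apply hj).comp measurable_snd
  exact (measurable_of_countable (fun q : Bool × Bool => q.1 && q.2)).comp (h1.prodMk h2)


lemma part1 (μ ν : Measure Conf) [IsProbabilityMeasure μ] [IsProbabilityMeasure ν]
    (ε : ℝ) (hε0 : 0 < ε) (hε1 : ε < 1) (hν : IsBernoulliProduct ν ε)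
    (i : Site) (lam : ℝ) (hlam0 : 0 ≤ lam) (hlam1 : lam ≤ 1)
    (hcond : ∀ᵐ x ∂μ,
      lam ≤ (μ[Set.indicator {y | y i = false} (fun _ => (1 : ℝ)) |
        MeasureTheory.cylinderEvents {i}ᶜ]) x)
    (B : Set Conf) (hB : MeasurableSet[MeasureTheory.cylinderEvents ({i}ᶜ : Set Site)] B) :
    ENNReal.ofReal (ε + (1 - ε) * lam) * Pe μ ν B ≤ Pe μ ν ({x | x i = false} ∩ B) := by
  classical
  have hle : MeasureTheory.cylinderEvents ({i}ᶜ : Set Site) ≤ (inferInstance : MeasurableSpace Conf) :=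
    MeasureTheory.cylinderEvents_le_pi
  have hBm : MeasurableSet B := hle _ hB
  set A : Set Conf := {x : Conf | x i = false} with hAdef
  have hA : MeasurableSet A := measurableSet_coord i false
  set C : Set (Conf × Conf) := minMap ⁻¹' B with hCdef
  have hCF : MeasurableSet[(MeasureTheory.cylinderEvents (X := fun _ : Site => Bool) ({i}ᶜ : Set Site)).prod (MeasureTheory.cylinderEvents (X := fun _ : Site => Bool) ({i}ᶜ : Set Site))] C := measurable_minMap_F i hB
  have hCm : MeasurableSet C := measurable_minMap hBm
  have hsec : ∀ x : Conf, MeasurableSet[(MeasureTheory.cylinderEvents (X := fun _ : Site => Bool) ({i}ᶜ : Set Site))] (Prod.mk x ⁻¹' C) := by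
    intro x
    letI : MeasurableSpace Conf := (MeasureTheory.cylinderEvents (X := fun _ : Site => Bool) ({i}ᶜ : Set Site))
    exact measurable_prodMk_left hCF
  set G : Conf → ℝ≥0∞ := fun x => ν (Prod.mk x ⁻¹' C) with hGdef
  have hGF : Measurable[(MeasureTheory.cylinderEvents (X := fun _ : Site => Bool) ({i}ᶜ : Set Site))] G := by
    have h1 : Measurable[(MeasureTheory.cylinderEvents (X := fun _ : Site => Bool) ({i}ᶜ : Set Site))] fun x => (ν.trim hle) (Prod.mk x ⁻¹' C) := by
      letI : MeasurableSpace Conf := (MeasureTheory.cylinderEvents (X := fun _ : Site => Bool) ({i}ᶜ : Set Site))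
      exact measurable_measure_prodMk_left hCF
    have heq : (fun x => (ν.trim hle) (Prod.mk x ⁻¹' C)) = G :=
      funext fun x => MeasureTheory.trim_measurableSet_eq hle (hsec x)
    rwa [heq] at h1
  have hGm : Measurable G := hGF.mono hle le_rfl
  have hGle : ∀ x, G x ≤ 1 := fun x => prob_le_one
  have hGlt : ∀ x, G x < ⊤ := fun x => lt_of_le_of_lt (hGle x) ENNReal.one_lt_top
  have hPeB : Pe μ ν B = ∫⁻ x, G x ∂μ := by
    rw [Pe, Measure.map_apply measurable_minMap hBm, Measure.prod_apply hCm]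
  -- decomposition of the preimage
  have hsplit : minMap ⁻¹' (A ∩ B) =
      ({p : Conf × Conf | p.2 i = false} ∩ C) ∪
        ({p : Conf × Conf | p.1 i = false ∧ p.2 i = true} ∩ C) := by
    ext p
    simp only [Set.mem_preimage, Set.mem_inter_iff, Set.mem_union, Set.mem_setOf_eq, hAdef,
      hCdef, minMap]
    cases hb : p.2 i <;> cases ha : p.1 i <;> simp [ha, hb] <;> tauto
  have hdisj : Disjoint ({p : Conf × Conf | p.2 i = false} ∩ C)
      ({p : Conf × Conf | p.1 i = false ∧ p.2 i = true} ∩ C) := by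
    refine Set.disjoint_left.2 ?_
    rintro p ⟨h1, -⟩ ⟨h2, -⟩
    rw [Set.mem_setOf_eq] at h1 h2
    rw [h2.2] at h1
    exact Bool.noConfusion h1
  have hm1 : MeasurableSet ({p : Conf × Conf | p.2 i = false} ∩ C) := by
    refine MeasurableSet.inter ?_ hCm
    exact measurable_snd (measurableSet_coord i false)
  have hm2 : MeasurableSet ({p : Conf × Conf | p.1 i = false ∧ p.2 i = true} ∩ C) := by
    refine MeasurableSet.inter ?_ hCm
    have : {p : Conf × Conf | p.1 i = false ∧ p.2 i = true}
        = (Prod.fst ⁻¹' {x : Conf | x i = false}) ∩ (Prod.snd ⁻¹' {x : Conf | x i = true}) := by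
      ext p; simp [Set.mem_preimage]
    rw [this]
    exact (measurable_fst (measurableSet_coord i false)).inter
      (measurable_snd (measurableSet_coord i true))
  -- first piece
  have hT2 : (μ.prod ν) ({p : Conf × Conf | p.2 i = false} ∩ C)
      = ENNReal.ofReal ε * ∫⁻ x, G x ∂μ := by
    rw [Measure.prod_apply hm1]
    have heq : ∀ x : Conf, ν (Prod.mk x ⁻¹' ({p : Conf × Conf | p.2 i = false} ∩ C))
        = ENNReal.ofReal ε * G x := by
      intro x
      have hpre : Prod.mk x ⁻¹' ({p : Conf × Conf | p.2 i = false} ∩ C)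
          = {y : Conf | y i = false} ∩ (Prod.mk x ⁻¹' C) := rfl
      rw [hpre, nu_inter_cyl hν false (hsec x)]
      norm_num; rfl
    rw [lintegral_congr heq, lintegral_const_mul _ hGm]
  -- second piece
  have hT1 : (μ.prod ν) ({p : Conf × Conf | p.1 i = false ∧ p.2 i = true} ∩ C)
      = ENNReal.ofReal (1 - ε) * ∫⁻ x in A, G x ∂μ := by
    rw [Measure.prod_apply hm2]
    have heq : ∀ x : Conf, ν (Prod.mk x ⁻¹' ({p : Conf × Conf | p.1 i = false ∧ p.2 i = true} ∩ C))
        = Set.indicator A (fun x => ENNReal.ofReal (1 - ε) * G x) x := by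
      intro x
      by_cases hx : x i = false
      · have hpre : Prod.mk x ⁻¹' ({p : Conf × Conf | p.1 i = false ∧ p.2 i = true} ∩ C)
            = {y : Conf | y i = true} ∩ (Prod.mk x ⁻¹' C) := by
          ext y; simp [Set.mem_preimage, hx]
        rw [hpre, nu_inter_cyl hν true (hsec x), Set.indicator_of_mem (show x ∈ A from hx)]
        norm_num; rfl
      · have hpre : Prod.mk x ⁻¹' ({p : Conf × Conf | p.1 i = false ∧ p.2 i = true} ∩ C)
            = (∅ : Set Conf) := by
          ext y; simp [Set.mem_preimage, hx]
        rw [hpre, Set.indicator_of_notMem (show x ∉ A from hx)]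
        simp
    rw [lintegral_congr heq, lintegral_indicator hA, lintegral_const_mul _ hGm]
  -- real-valued function
  set g : Conf → ℝ := fun x => (G x).toReal with hgdef
  have hgF : StronglyMeasurable[(MeasureTheory.cylinderEvents (X := fun _ : Site => Bool) ({i}ᶜ : Set Site))] g :=
    (Measurable.ennreal_toReal hGF).stronglyMeasurable
  have hgm : MeasureTheory.AEStronglyMeasurable g μ :=
    (Measurable.ennreal_toReal hGm).aestronglyMeasurable
  have hg0 : ∀ x, 0 ≤ g x := fun x => ENNReal.toReal_nonneg
  have hg1 : ∀ x, ‖g x‖ ≤ 1 := fun x => by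
    rw [Real.norm_eq_abs, abs_of_nonneg (hg0 x)]
    simpa using ENNReal.toReal_mono ENNReal.one_ne_top (hGle x)
  have hgint : MeasureTheory.Integrable g μ :=
    MeasureTheory.Integrable.mono' (MeasureTheory.integrable_const 1) hgm
      (Filter.Eventually.of_forall hg1)
  set f1 : Conf → ℝ := Set.indicator {y : Conf | y i = false} (fun _ => (1 : ℝ)) with hf1def
  have hf1int : Integrable f1 μ := (MeasureTheory.integrable_const (1 : ℝ)).indicator hA
  have hgf1int : Integrable (fun x => g x * f1 x) μ := hf1int.bdd_mul hgm (Filter.Eventually.of_forall hg1)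
  have hcexp_int : Integrable (fun x => g x * (μ[f1|(MeasureTheory.cylinderEvents (X := fun _ : Site => Bool) ({i}ᶜ : Set Site))]) x) μ :=
    integrable_condExp.bdd_mul hgm (Filter.Eventually.of_forall hg1)
  have hcondint : ∫ x, g x * f1 x ∂μ = ∫ x, g x * (μ[f1|(MeasureTheory.cylinderEvents (X := fun _ : Site => Bool) ({i}ᶜ : Set Site))]) x ∂μ := by
    have e1 : ∫ x, g x * f1 x ∂μ
        = ∫ x, (μ[fun x => g x * f1 x|MeasureTheory.cylinderEvents (X := fun _ : Site => Bool) ({i}ᶜ : Set Site)]) x ∂μ :=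
      (MeasureTheory.integral_condExp hle).symm
    rw [e1]
    exact integral_congr_ae (condExp_mul_of_stronglyMeasurable_left hgF hgf1int hf1int)
  have hreal : lam * ∫ x, g x ∂μ ≤ ∫ x in A, g x ∂μ := by
    have h1 : ∫ x in A, g x ∂μ = ∫ x, g x * f1 x ∂μ := by
      rw [← MeasureTheory.integral_indicator hA]
      congr 1
      funext x
      by_cases hx : x ∈ A
      · rw [Set.indicator_of_mem (show x ∈ {y : Conf | y i = false} from hx), hf1def, Set.indicator_of_mem (show x ∈ {y : Conf | y i = false} from hx), mul_one]
      · rw [Set.indicator_of_notMem (show x ∉ {y : Conf | y i = false} from hx), hf1def, Set.indicator_of_notMem (show x ∉ {y : Conf | y i = false} from hx), mul_zero]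
    rw [h1, hcondint]
    have h2 : ∀ᵐ x ∂μ, lam * g x ≤ g x * (μ[f1|(MeasureTheory.cylinderEvents (X := fun _ : Site => Bool) ({i}ᶜ : Set Site))]) x := by
      filter_upwards [hcond] with x hx
      calc lam * g x = g x * lam := mul_comm _ _
        _ ≤ g x * (μ[f1|(MeasureTheory.cylinderEvents (X := fun _ : Site => Bool) ({i}ᶜ : Set Site))]) x := mul_le_mul_of_nonneg_left hx (hg0 x)
    calc lam * ∫ x, g x ∂μ = ∫ x, lam * g x ∂μ := (integral_const_mul lam g).symm
      _ ≤ ∫ x, g x * (μ[f1|(MeasureTheory.cylinderEvents (X := fun _ : Site => Bool) ({i}ᶜ : Set Site))]) x ∂μ := integral_mono_ae (hgint.const_mul lam) hcexp_int h2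
  -- lift to ennreal
  have hI_ne : (∫⁻ x, G x ∂μ) ≠ ⊤ := by
    refine ne_of_lt (lt_of_le_of_lt (lintegral_mono hGle) ?_)
    simp
  have hJ_le : (∫⁻ x in A, G x ∂μ) ≤ ∫⁻ x, G x ∂μ := setLIntegral_le_lintegral A G
  have hJ_ne : (∫⁻ x in A, G x ∂μ) ≠ ⊤ := ne_of_lt (lt_of_le_of_lt hJ_le hI_ne.lt_top)
  have hIto : (∫⁻ x, G x ∂μ).toReal = ∫ x, g x ∂μ :=
    (integral_toReal hGm.aemeasurable (Filter.Eventually.of_forall hGlt)).symm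
  have hJto : (∫⁻ x in A, G x ∂μ).toReal = ∫ x in A, g x ∂μ :=
    (integral_toReal hGm.aemeasurable (Filter.Eventually.of_forall hGlt)).symm
  have hkey : ENNReal.ofReal lam * ∫⁻ x, G x ∂μ ≤ ∫⁻ x in A, G x ∂μ := by
    calc ENNReal.ofReal lam * ∫⁻ x, G x ∂μ
        = ENNReal.ofReal lam * ENNReal.ofReal ((∫⁻ x, G x ∂μ).toReal) := by
          rw [ENNReal.ofReal_toReal hI_ne]
      _ = ENNReal.ofReal (lam * (∫⁻ x, G x ∂μ).toReal) := (ENNReal.ofReal_mul hlam0).symm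
      _ ≤ ENNReal.ofReal ((∫⁻ x in A, G x ∂μ).toReal) :=
          ENNReal.ofReal_le_ofReal (by rw [hIto, hJto]; exact hreal)
      _ = ∫⁻ x in A, G x ∂μ := ENNReal.ofReal_toReal hJ_ne
  -- final assembly
  have hPeAB : Pe μ ν (A ∩ B)
      = ENNReal.ofReal ε * ∫⁻ x, G x ∂μ + ENNReal.ofReal (1 - ε) * ∫⁻ x in A, G x ∂μ := by
    rw [Pe, Measure.map_apply measurable_minMap (hA.inter hBm), hsplit,
      measure_union hdisj hm2, hT2, hT1]
  rw [hPeAB, hPeB]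
  calc ENNReal.ofReal (ε + (1 - ε) * lam) * ∫⁻ x, G x ∂μ
      = ENNReal.ofReal ε * ∫⁻ x, G x ∂μ
        + ENNReal.ofReal (1 - ε) * (ENNReal.ofReal lam * ∫⁻ x, G x ∂μ) := by
        rw [ENNReal.ofReal_add hε0.le (mul_nonneg (by linarith) hlam0), add_mul,
          ENNReal.ofReal_mul (by linarith), mul_assoc]
    _ ≤ ENNReal.ofReal ε * ∫⁻ x, G x ∂μ + ENNReal.ofReal (1 - ε) * ∫⁻ x in A, G x ∂μ :=
        add_le_add_right (mul_le_mul_right hkey _) _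


theorem statement3 (μ ν : Measure Conf) [IsProbabilityMeasure μ] [IsProbabilityMeasure ν]
    (ε : ℝ) (hε0 : 0 < ε) (hε1 : ε < 1) (hν : IsBernoulliProduct ν ε)
    (i : Site) (lam : ℝ) (hlam0 : 0 ≤ lam) (hlam1 : lam ≤ 1)
    (hcond : ∀ᵐ x ∂μ,
      lam ≤ (μ[Set.indicator {y | y i = false} (fun _ => (1 : ℝ)) | MeasureTheory.cylinderEvents {i}ᶜ]) x) :
    (∀ B : Set Conf, MeasurableSet[MeasureTheory.cylinderEvents {i}ᶜ] B →
        ENNReal.ofReal (ε + (1 - ε) * lam) * Pe μ ν B ≤ Pe μ ν ({x | x i = false} ∩ B)) ∧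
      ∀ᵐ x ∂(Pe μ ν),
        ε + (1 - ε) * lam ≤
          ((Pe μ ν)[Set.indicator {y | y i = false} (fun _ => (1 : ℝ)) |
            MeasureTheory.cylinderEvents {i}ᶜ]) x := by
  classical
  have hle : MeasureTheory.cylinderEvents (X := fun _ : Site => Bool) ({i}ᶜ : Set Site)
      ≤ (inferInstance : MeasurableSpace Conf) := MeasureTheory.cylinderEvents_le_pi
  haveI hP : IsProbabilityMeasure (Pe μ ν) := by
    rw [Pe]; exact Measure.isProbabilityMeasure_map measurable_minMap.aemeasurable
  refine ⟨fun B hB => part1 μ ν ε hε0 hε1 hν i lam hlam0 hlam1 hcond B hB, ?_⟩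
  set P := Pe μ ν with hPdef
  set f1 : Conf → ℝ := Set.indicator {y : Conf | y i = false} (fun _ => (1 : ℝ)) with hf1def
  set c : ℝ := ε + (1 - ε) * lam with hcdef
  have hc0 : 0 ≤ c := by
    have := mul_nonneg (by linarith : (0:ℝ) ≤ 1 - ε) hlam0
    rw [hcdef]; linarith
  set h := P[f1 | MeasureTheory.cylinderEvents {i}ᶜ] with hhdef
  have hA : MeasurableSet {y : Conf | y i = false} := measurableSet_coord i false
  have hf1int : Integrable f1 P := (integrable_const (1 : ℝ)).indicator hA
  have hDnull : ∀ n : ℕ, P {x : Conf | h x ≤ c - ((n : ℝ) + 1)⁻¹} = 0 := by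
    intro n
    set δ : ℝ := ((n : ℝ) + 1)⁻¹ with hδdef
    have hδ0 : 0 < δ := by rw [hδdef]; positivity
    set D := {x : Conf | h x ≤ c - δ} with hDdef
    have hDF : MeasurableSet[MeasureTheory.cylinderEvents (X := fun _ : Site => Bool) ({i}ᶜ : Set Site)] D := by
      have hsm : StronglyMeasurable[MeasureTheory.cylinderEvents (X := fun _ : Site => Bool) ({i}ᶜ : Set Site)] h := by
        rw [hhdef]; exact stronglyMeasurable_condExp
      have hDeq : D = h ⁻¹' (Set.Iic (c - δ)) := rfl
      rw [hDeq]
      exact hsm.measurable measurableSet_Iic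
    have hDm : MeasurableSet D := hle _ hDF
    have h1 : ∫ x in D, h x ∂P = (P ({x : Conf | x i = false} ∩ D)).toReal := by
      calc ∫ x in D, h x ∂P = ∫ x in D, f1 x ∂P := by
            rw [hhdef]; exact setIntegral_condExp hle hf1int hDF
        _ = ∫ _x in {y : Conf | y i = false} ∩ D, (1 : ℝ) ∂P := by
            rw [hf1def, setIntegral_indicator hA, Set.inter_comm]
        _ = (P ({x : Conf | x i = false} ∩ D)).toReal := by
            rw [setIntegral_const]; simp [measureReal_def]
    have h2 : ∫ x in D, h x ∂P ≤ (c - δ) * (P D).toReal := by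
      have hmono := setIntegral_mono_on (integrable_condExp.integrableOn :
          IntegrableOn h D P) (integrableOn_const (measure_ne_top P D)) hDm
        (fun x hx => hx)
      calc ∫ x in D, h x ∂P ≤ ∫ _x in D, (c - δ) ∂P := hmono
        _ = (c - δ) * (P D).toReal := by rw [setIntegral_const, smul_eq_mul, mul_comm, measureReal_def]
    have h3 : c * (P D).toReal ≤ (P ({x : Conf | x i = false} ∩ D)).toReal := by
      have hpp := part1 μ ν ε hε0 hε1 hν i lam hlam0 hlam1 hcond D hDF
      have h4 := ENNReal.toReal_mono (measure_ne_top P _) hpp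
      rwa [ENNReal.toReal_mul, ENNReal.toReal_ofReal hc0] at h4
    have h5 : (P D).toReal = 0 := by
      nlinarith [ENNReal.toReal_nonneg (a := P D)]
    exact ((ENNReal.toReal_eq_zero_iff _).mp h5).resolve_right (measure_ne_top P D)
  have hsub : {x : Conf | ¬ c ≤ h x} ⊆ ⋃ n : ℕ, {x : Conf | h x ≤ c - ((n : ℝ) + 1)⁻¹} := by
    intro x hx
    rw [Set.mem_setOf_eq, not_le] at hx
    obtain ⟨n, hn⟩ := exists_nat_one_div_lt (by linarith : 0 < c - h x)
    refine Set.mem_iUnion.2 ⟨n, ?_⟩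
    rw [Set.mem_setOf_eq]
    rw [one_div] at hn
    linarith
  have hnull : P {x : Conf | ¬ c ≤ h x} = 0 :=
    measure_mono_null hsub (measure_iUnion_null hDnull)
  exact ae_iff.mpr hnull


end
end

section
/- Let P be a probability measure on S and let 0 ≤ q < 1/3 be such that for every n ≥ 1 and every self-avoiding path Γ = (i₁, …, i_n) with i₁ an L¹-neighbor of the origin, P(⋂_{k=1}^{n} {X_{i_k} = −1}) ≤ qⁿ. Then P(for every n ≥ 1 there exists a self-avoiding path (i₁, …, i_n) with i₁ an L¹-neighbor of the origin and X_{i_k} = −1 for all 1 ≤ k ≤ n) = 0. -/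
open MeasureTheory

noncomputable section

/-- The `L¹`-distance `‖a - b‖₁` on `ℤ²`. -/
def L1dist (a b : Site) : ℤ := |a.1 - b.1| + |a.2 - b.2|

/-- A self-avoiding path of length `n` in `ℤ²`: a finite sequence `(i₁, …, i_n)` of sites
such that `i_j` and `i_k` are `L¹`-neighbors if and only if `|j - k| = 1`. -/
def IsSAPath {n : ℕ} (p : Fin n → Site) : Prop :=
  ∀ j k : Fin n, L1dist (p j) (p k) = 1 ↔ |(j : ℤ) - (k : ℤ)| = 1

lemma abs_helper {a : ℤ} (h : a = 1 ∨ a = -1) : |a| = 1 := by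
  rcases h with h | h <;> rw [h] <;> norm_num

/-- neighbors of a site -/
def nbrs (s : Site) : Finset Site := {(s.1+1, s.2), (s.1-1, s.2), (s.1, s.2+1), (s.1, s.2-1)}

lemma mem_nbrs {s t : Site} (h : L1dist t s = 1) : t ∈ nbrs s := by
  unfold L1dist at h
  have h1 := abs_choice (t.1 - s.1)
  have h2 := abs_choice (t.2 - s.2)
  have h3 := abs_nonneg (t.1 - s.1)
  have h4 := abs_nonneg (t.2 - s.2)
  simp only [nbrs, Finset.mem_insert, Finset.mem_singleton, Prod.ext_iff]
  omega

lemma card_nbrs (s : Site) : (nbrs s).card ≤ 4 := by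
  unfold nbrs
  refine (Finset.card_insert_le _ _).trans (Nat.succ_le_succ ?_)
  refine (Finset.card_insert_le _ _).trans (Nat.succ_le_succ ?_)
  refine (Finset.card_insert_le _ _).trans (Nat.succ_le_succ ?_)
  simp

def good (n : ℕ) (p : Fin (n+1) → Site) : Prop :=
  IsSAPath p ∧ L1dist (p ⟨0, n.succ_pos⟩) ((0 : ℤ), (0 : ℤ)) = 1

lemma good_consec {n : ℕ} {p : Fin (n+1) → Site} (h : IsSAPath p)
    {j k : ℕ} (hj : j < n+1) (hk : k < n+1) (hjk : k = j + 1) :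
    L1dist (p ⟨j, hj⟩) (p ⟨k, hk⟩) = 1 := by
  refine (h ⟨j, hj⟩ ⟨k, hk⟩).mpr ?_
  show |((j:ℕ) : ℤ) - ((k:ℕ) : ℤ)| = 1
  exact abs_helper (by omega)

def box (n : ℕ) : Finset Site :=
  Finset.Icc (-(n:ℤ)-1) ((n:ℤ)+1) ×ˢ Finset.Icc (-(n:ℤ)-1) ((n:ℤ)+1)

open Classical in
def F (n : ℕ) : Finset (Fin (n+1) → Site) :=
  (Fintype.piFinset fun _ => box n).filter (good n)

lemma mem_F {n : ℕ} {p : Fin (n+1) → Site} (h : good n p) : p ∈ F n := by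
  classical
  rw [F, Finset.mem_filter]
  refine ⟨?_, h⟩
  rw [Fintype.mem_piFinset]
  have key : ∀ j (hj : j < n+1), |(p ⟨j, hj⟩).1| + |(p ⟨j, hj⟩).2| ≤ (j : ℤ) + 1 := by
    intro j
    induction j with
    | zero =>
      intro hj
      have h0 := h.2
      unfold L1dist at h0
      simp only at h0
      have h1 := abs_choice ((p ⟨0, hj⟩).1)
      have h2 := abs_choice ((p ⟨0, hj⟩).2)
      have h3 := abs_choice ((p ⟨0, hj⟩).1 - 0)
      have h4 := abs_choice ((p ⟨0, hj⟩).2 - 0)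
      have n1 := abs_nonneg ((p ⟨0, hj⟩).1)
      have n2 := abs_nonneg ((p ⟨0, hj⟩).2)
      have n3 := abs_nonneg ((p ⟨0, hj⟩).1 - 0)
      have n4 := abs_nonneg ((p ⟨0, hj⟩).2 - 0)
      omega
    | succ k ih =>
      intro hj
      have hk : k < n + 1 := by omega
      have hd := good_consec h.1 hk hj rfl
      unfold L1dist at hd
      have hik := ih hk
      have h1 := abs_choice ((p ⟨k, hk⟩).1)
      have h2 := abs_choice ((p ⟨k, hk⟩).2)
      have h3 := abs_choice ((p ⟨k+1, hj⟩).1)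
      have h4 := abs_choice ((p ⟨k+1, hj⟩).2)
      have h5 := abs_choice ((p ⟨k, hk⟩).1 - (p ⟨k+1, hj⟩).1)
      have h6 := abs_choice ((p ⟨k, hk⟩).2 - (p ⟨k+1, hj⟩).2)
      have n1 := abs_nonneg ((p ⟨k, hk⟩).1)
      have n2 := abs_nonneg ((p ⟨k, hk⟩).2)
      have n3 := abs_nonneg ((p ⟨k+1, hj⟩).1)
      have n4 := abs_nonneg ((p ⟨k+1, hj⟩).2)
      have n5 := abs_nonneg ((p ⟨k, hk⟩).1 - (p ⟨k+1, hj⟩).1)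
      have n6 := abs_nonneg ((p ⟨k, hk⟩).2 - (p ⟨k+1, hj⟩).2)
      omega
  intro k
  have hk := key k.1 k.2
  have hkn : (k : ℕ) ≤ n := by omega
  have h1 := abs_choice ((p k).1)
  have h2 := abs_choice ((p k).2)
  have n1 := abs_nonneg ((p k).1)
  have n2 := abs_nonneg ((p k).2)
  simp only [Fin.eta] at hk
  rw [box, Finset.mem_product, Finset.mem_Icc, Finset.mem_Icc]
  have : ((k : ℕ) : ℤ) ≤ n := by exact_mod_cast hkn
  omega

lemma good_restrict {n : ℕ} {p : Fin (n+2) → Site} (h : good (n+1) p) :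
    good n (p ∘ Fin.castSucc) := by
  refine ⟨?_, h.2⟩
  intro j k
  have := h.1 j.castSucc k.castSucc
  simpa using this

lemma card_F_zero : (F 0).card ≤ 4 := by
  have : (F 0).card ≤ (nbrs ((0:ℤ), (0:ℤ))).card := by
    refine Finset.card_le_card_of_injOn (fun p => p ⟨0, Nat.one_pos⟩) ?_ ?_
    · intro p hp
      classical
      rw [Finset.mem_coe, F, Finset.mem_filter] at hp
      exact mem_nbrs hp.2.2
    · intro p hp q hq hpq
      funext k
      have : k = ⟨0, Nat.one_pos⟩ := by omega
      rw [this]; exact hpq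
  exact this.trans (card_nbrs _)

lemma restrict_maps {n : ℕ} :
    ∀ a ∈ (F (n+1)).image (fun p : Fin (n+2) → Site => p ∘ Fin.castSucc), a ∈ F n := by
  classical
  intro a ha
  rw [Finset.mem_image] at ha
  obtain ⟨p, hp, rfl⟩ := ha
  rw [F, Finset.mem_filter] at hp
  exact mem_F (good_restrict hp.2)

lemma card_F_succ (n : ℕ) : (F (n+1)).card ≤ 4 * (F n).card := by
  classical
  have key := Finset.card_le_mul_card_image (f := fun p : Fin (n+2) → Site => p ∘ Fin.castSucc)
    (F (n+1)) 4 ?_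
  · exact key.trans (Nat.mul_le_mul_left 4 (Finset.card_le_card restrict_maps))
  · intro a ha
    have : ((F (n+1)).filter fun p => p ∘ Fin.castSucc = a).card ≤ (nbrs (a (Fin.last n))).card := by
      refine Finset.card_le_card_of_injOn (fun p => p (Fin.last (n+1))) ?_ ?_
      · intro p hp
        rw [Finset.mem_coe, Finset.mem_filter] at hp
        obtain ⟨hp1, hp2⟩ := hp
        rw [F, Finset.mem_filter] at hp1
        have hd : L1dist (p (Fin.last (n+1))) (p ⟨n, by omega⟩) = 1 := by
          refine (hp1.2.1 (Fin.last (n+1)) ⟨n, by omega⟩).mpr ?_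
          show |((n+1 : ℕ) : ℤ) - ((n:ℕ) : ℤ)| = 1
          exact abs_helper (by omega)
        have heq : p ⟨n, by omega⟩ = a (Fin.last n) := by
          have := congrFun hp2 (Fin.last n)
          simpa [Fin.castSucc, Fin.last] using this
        rw [heq] at hd
        exact mem_nbrs hd
      · intro p hp q hq hpq
        rw [Finset.mem_coe, Finset.mem_filter] at hp hq
        funext k
        refine Fin.lastCases ?_ ?_ k
        · exact hpq
        · intro i
          exact congrFun (hp.2.trans hq.2.symm) i
    exact this.trans (card_nbrs _)

lemma no_backtrack {n : ℕ} (hn : 2 ≤ n) {p : Fin (n+2) → Site} (h : IsSAPath p) :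
    p (Fin.last (n+1)) ≠ p ⟨n-1, by omega⟩ := by
  intro heq
  have hd : L1dist (p ⟨n-2, by omega⟩) (p ⟨n-1, by omega⟩) = 1 :=
    good_consec h (by omega) (by omega) (by omega)
  rw [← heq] at hd
  have h2 := (h ⟨n-2, by omega⟩ (Fin.last (n+1))).mp hd
  have h3 : ((n-2 : ℕ) : ℤ) - ((n+1 : ℕ) : ℤ) = -3 := by omega
  rw [show (((⟨n-2, by omega⟩ : Fin (n+2))) : ℤ) = ((n-2 : ℕ) : ℤ) from rfl,
    show ((Fin.last (n+1) : Fin (n+2)) : ℤ) = ((n+1 : ℕ) : ℤ) from rfl, h3] at h2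
  norm_num at h2

lemma card_F_succ3 (n : ℕ) (hn : 2 ≤ n) : (F (n+1)).card ≤ 3 * (F n).card := by
  classical
  have key := Finset.card_le_mul_card_image (f := fun p : Fin (n+2) → Site => p ∘ Fin.castSucc)
    (F (n+1)) 3 ?_
  · exact key.trans (Nat.mul_le_mul_left 3 (Finset.card_le_card restrict_maps))
  · intro a ha
    rw [Finset.mem_image] at ha
    obtain ⟨p0, hp0, ha⟩ := ha
    rw [F, Finset.mem_filter] at hp0
    have hSA0 := hp0.2.1
    have hmem : a ⟨n-1, by omega⟩ ∈ nbrs (a (Fin.last n)) := by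
      rw [← ha]
      have hd : L1dist (p0 (Fin.castSucc ⟨n-1, by omega⟩)) (p0 (Fin.castSucc (Fin.last n))) = 1 := by
        refine (hSA0 _ _).mpr ?_
        show |((n-1 : ℕ) : ℤ) - ((n : ℕ) : ℤ)| = 1
        exact abs_helper (by omega)
      exact mem_nbrs hd
    have hcard : ((nbrs (a (Fin.last n))).erase (a ⟨n-1, by omega⟩)).card ≤ 3 := by
      rw [Finset.card_erase_of_mem hmem]
      have := card_nbrs (a (Fin.last n))
      omega
    refine le_trans ?_ hcard
    refine Finset.card_le_card_of_injOn (fun p => p (Fin.last (n+1))) ?_ ?_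
    · intro p hp
      rw [Finset.mem_coe, Finset.mem_filter] at hp
      obtain ⟨hp1, hp2⟩ := hp
      rw [F, Finset.mem_filter] at hp1
      have hSA := hp1.2.1
      rw [Finset.mem_coe, Finset.mem_erase]
      constructor
      · have h1 : a ⟨n-1, by omega⟩ = p ⟨n-1, by omega⟩ := (congrFun hp2 ⟨n-1, by omega⟩).symm
        rw [h1]
        exact no_backtrack hn hSA
      · have hd : L1dist (p (Fin.last (n+1))) (p ⟨n, by omega⟩) = 1 := by
          refine (hSA (Fin.last (n+1)) ⟨n, by omega⟩).mpr ?_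
          show |((n+1 : ℕ) : ℤ) - ((n:ℕ) : ℤ)| = 1
          exact abs_helper (by omega)
        have h2 : p ⟨n, by omega⟩ = a (Fin.last n) := by
          have := congrFun hp2 (Fin.last n)
          simpa [Fin.castSucc, Fin.last] using this
        rw [h2] at hd
        exact mem_nbrs hd
    · intro p hp q hq hpq
      rw [Finset.mem_coe, Finset.mem_filter] at hp hq
      funext k
      refine Fin.lastCases ?_ ?_ k
      · exact hpq
      · intro i
        exact congrFun (hp.2.trans hq.2.symm) i

lemma card_F : ∀ n, (F n).card ≤ 8 * 3 ^ n
  | 0 => card_F_zero.trans (by norm_num)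
  | 1 => by
      calc (F 1).card ≤ 4 * (F 0).card := card_F_succ 0
        _ ≤ 4 * 4 := by have := card_F_zero; omega
        _ ≤ 8 * 3 ^ 1 := by norm_num
  | 2 => by
      calc (F 2).card ≤ 4 * (F 1).card := card_F_succ 1
        _ ≤ 4 * (4 * (F 0).card) := by
            have h : (F 1).card ≤ 4 * (F 0).card := card_F_succ 0; omega
        _ ≤ 4 * (4 * 4) := by have := card_F_zero; omega
        _ ≤ 8 * 3 ^ 2 := by norm_num
  | (n+3) => by
      have h3 := card_F_succ3 (n+2) (by omega)
      have ih := card_F (n+2)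
      calc (F (n+3)).card ≤ 3 * (F (n+2)).card := h3
        _ ≤ 3 * (8 * 3 ^ (n+2)) := by omega
        _ = 8 * 3 ^ (n+3) := by ring

theorem statement5 (P : Measure Conf) [IsProbabilityMeasure P] (q : ℝ)
    (hq0 : 0 ≤ q) (hq : q < 1 / 3)
    (hbound : ∀ (n : ℕ) (hn : 1 ≤ n) (p : Fin n → Site), IsSAPath p →
      L1dist (p ⟨0, hn⟩) ((0 : ℤ), (0 : ℤ)) = 1 →
      P {x | ∀ k, x (p k) = false} ≤ ENNReal.ofReal (q ^ n)) :
    P {x | ∀ (n : ℕ) (hn : 1 ≤ n), ∃ p : Fin n → Site, IsSAPath p ∧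
        L1dist (p ⟨0, hn⟩) ((0 : ℤ), (0 : ℤ)) = 1 ∧ ∀ k, x (p k) = false} = 0 := by
  classical
  set E : Set Conf := {x | ∀ (n : ℕ) (hn : 1 ≤ n), ∃ p : Fin n → Site, IsSAPath p ∧
        L1dist (p ⟨0, hn⟩) ((0 : ℤ), (0 : ℤ)) = 1 ∧ ∀ k, x (p k) = false} with hE
  have hbnd : ∀ n : ℕ, P E ≤ ENNReal.ofReal (8 * (3:ℝ)^n * q^(n+1)) := by
    intro n
    have hEsub : E ⊆ ⋃ p ∈ F n, {x : Conf | ∀ k, x (p k) = false} := by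
      intro x hx
      obtain ⟨p, hSA, hstart, hfalse⟩ := hx (n+1) (by omega)
      exact Set.mem_biUnion (mem_F ⟨hSA, hstart⟩) hfalse
    have h1 : P E ≤ ∑ p ∈ F n, P {x : Conf | ∀ k, x (p k) = false} :=
      (measure_mono hEsub).trans (measure_biUnion_finset_le _ _)
    have h2 : ∀ p ∈ F n, P {x : Conf | ∀ k, x (p k) = false} ≤ ENNReal.ofReal (q ^ (n+1)) := by
      intro p hp
      rw [F, Finset.mem_filter] at hp
      exact hbound (n+1) (by omega) p hp.2.1 hp.2.2
    have h3 : P E ≤ (F n).card • ENNReal.ofReal (q ^ (n+1)) :=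
      h1.trans (Finset.sum_le_card_nsmul _ _ _ h2)
    rw [nsmul_eq_mul] at h3
    refine h3.trans ?_
    calc ((F n).card : ENNReal) * ENNReal.ofReal (q ^ (n+1))
        ≤ ((8 * 3^n : ℕ) : ENNReal) * ENNReal.ofReal (q ^ (n+1)) := by
          gcongr
          exact_mod_cast card_F n
      _ = ENNReal.ofReal (((8 * 3^n : ℕ) : ℝ) * q ^ (n+1)) := by
          rw [← ENNReal.ofReal_natCast (8 * 3^n), ← ENNReal.ofReal_mul (by positivity)]
      _ = ENNReal.ofReal (8 * (3:ℝ)^n * q^(n+1)) := by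
          congr 1
          push_cast
          ring
  have htend : Filter.Tendsto (fun n : ℕ => ENNReal.ofReal (8 * (3:ℝ)^n * q^(n+1)))
      Filter.atTop (nhds 0) := by
    have hreal : Filter.Tendsto (fun n : ℕ => 8 * (3:ℝ)^n * q^(n+1)) Filter.atTop (nhds 0) := by
      have hfe : (fun n : ℕ => 8 * (3:ℝ)^n * q^(n+1)) = fun n : ℕ => (8*q) * (3*q)^n := by
        funext n; rw [pow_succ, mul_pow]; ring
      rw [hfe]
      have h2 := tendsto_pow_atTop_nhds_zero_of_lt_one (r := 3*q) (by linarith) (by linarith)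
      simpa using h2.const_mul (8*q)
    simpa using ENNReal.tendsto_ofReal hreal
  have := ge_of_tendsto' htend hbnd
  exact le_antisymm this zero_le

end
end

section
/- For every configuration x ∈ S and every site i ∈ ℤ², the following are equivalent: (a) i has a finite context in x, i.e., there exists a finite L¹-connected set F ⊆ ℤ² with i ∈ int F and x_j = +1 for all j ∈ ∂F; (b) there exists n ≥ 1 such that there is no self-avoiding path (i₁, …, i_n) with i₁ an L¹-neighbor of i and x_{i_k} = −1 for all 1 ≤ k ≤ n. -/
/-- The boundary `∂F = {j ∈ F : ∃ k ∉ F, ‖j - k‖₁ = 1}` of a set `F ⊆ ℤ²`. -/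
def bdry (F : Set Site) : Set Site := {j ∈ F | ∃ k ∉ F, L1dist j k = 1}

/-- The interior `int F = F \ ∂F` of a set `F ⊆ ℤ²`. -/
def intr (F : Set Site) : Set Site := F \ bdry F

/-- `F` is `L¹`-connected: any two distinct points of `F` are joined by a finite path of
sites of `F` in which consecutive sites are `L¹`-neighbors. -/
def L1Connected (F : Set Site) : Prop :=
  ∀ a ∈ F, ∀ b ∈ F, a ≠ b → ∃ n : ℕ, ∃ p : Fin (n + 1) → Site,
    p 0 = a ∧ p (Fin.last n) = b ∧ (∀ k, p k ∈ F) ∧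
      ∀ k : Fin n, L1dist (p k.castSucc) (p k.succ) = 1

/-- Site `i` has a finite context in the configuration `x`: there is a finite
`L¹`-connected set `F ⊆ ℤ²` with `i ∈ int F` and `x_j = +1` for all `j ∈ ∂F`. -/
def HasFiniteContext (x : Conf) (i : Site) : Prop :=
  ∃ F : Set Site, F.Finite ∧ L1Connected F ∧ i ∈ intr F ∧ ∀ j ∈ bdry F, x j = true

/-! ### Auxiliary lemmas on `L1dist` -/

lemma L1dist_comm (a b : Site) : L1dist a b = L1dist b a := by
  simp [L1dist, abs_sub_comm]

lemma L1dist_self (a : Site) : L1dist a a = 0 := by simp [L1dist]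

lemma L1dist_triangle (a b c : Site) : L1dist a c ≤ L1dist a b + L1dist b c := by
  have h1 := abs_sub_le a.1 b.1 c.1
  have h2 := abs_sub_le a.2 b.2 c.2
  simp only [L1dist]; linarith

lemma abs_sub_one_iff (a b : ℕ) : |(a:ℤ) - (b:ℤ)| = 1 ↔ (a = b + 1 ∨ b = a + 1) := by
  rw [abs_eq (by norm_num : (0:ℤ) ≤ 1)]; omega

lemma fin_abs {n : ℕ} (j k : Fin n) :
    |(j : ℤ) - (k : ℤ)| = 1 ↔ (j.val = k.val + 1 ∨ k.val = j.val + 1) :=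
  abs_sub_one_iff j.val k.val

/-! ### Injectivity of long self-avoiding paths -/

lemma sa_inj {n : ℕ} {p : Fin n → Site} (hSA : IsSAPath p) (hn4 : 4 ≤ n) :
    Function.Injective p := by
  have main : ∀ j k : Fin n, p j = p k → j.val < k.val → False := by
    intro j k heq hlt
    have h1 : ¬ |(j:ℤ) - (k:ℤ)| = 1 := by
      intro h
      have h2 := (hSA j k).mpr h
      rw [heq, L1dist_self] at h2
      exact absurd h2 (by norm_num)
    rw [fin_abs] at h1
    push_neg at h1
    have hk2 : j.val + 2 ≤ k.val := by omega
    have hj1 : j.val + 1 < n := by omega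
    have a1 : L1dist (p ⟨j.val + 1, hj1⟩) (p j) = 1 :=
      (hSA _ _).mpr ((fin_abs _ _).mpr (Or.inl rfl))
    have a2 : L1dist (p ⟨j.val + 1, hj1⟩) (p k) = 1 := by rw [← heq]; exact a1
    have hk22 : k.val = j.val + 2 := by
      have := (fin_abs _ _).mp ((hSA _ _).mp a2)
      simp only at this
      omega
    by_cases hk1 : k.val + 1 < n
    · have b1 : L1dist (p ⟨k.val + 1, hk1⟩) (p k) = 1 :=
        (hSA _ _).mpr ((fin_abs _ _).mpr (Or.inl rfl))
      have b2 : L1dist (p ⟨k.val + 1, hk1⟩) (p j) = 1 := by rw [heq]; exact b1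
      have := (fin_abs _ _).mp ((hSA _ _).mp b2)
      simp only at this
      omega
    · by_cases hj0 : 0 < j.val
      · have hjm : j.val - 1 < n := by omega
        have c1 : L1dist (p ⟨j.val - 1, hjm⟩) (p j) = 1 :=
          (hSA _ _).mpr ((fin_abs _ _).mpr (Or.inr (by simp only; omega)))
        have c2 : L1dist (p ⟨j.val - 1, hjm⟩) (p k) = 1 := by rw [← heq]; exact c1
        have := (fin_abs _ _).mp ((hSA _ _).mp c2)
        simp only at this
        omega
      · omega
  intro j k heq
  by_contra hne
  have hvalne : j.val ≠ k.val := fun h => hne (Fin.ext h)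
  rcases lt_or_gt_of_ne hvalne with h | h
  · exact main j k heq h
  · exact main k j heq.symm h

/-! ### Chains of false sites and the cluster of `i` -/

/-- A walk of `false` sites of length `m` starting next to `i`. -/
def NChain (x : Conf) (i : Site) (m : ℕ) (p : ℕ → Site) : Prop :=
  L1dist (p 0) i = 1 ∧ (∀ t ≤ m, x (p t) = false) ∧ ∀ t < m, L1dist (p t) (p (t+1)) = 1

/-- The cluster of false sites reachable via false walks from a neighbor of `i`. -/
def Clu (x : Conf) (i : Site) : Set Site := {c | ∃ m p, NChain x i m p ∧ p m = c}

lemma clu_base {x : Conf} {i s : Site} (h1 : L1dist s i = 1) (h2 : x s = false) :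
    s ∈ Clu x i := ⟨0, fun _ => s, ⟨h1, fun _ _ => h2, fun t ht => absurd ht (by omega)⟩, rfl⟩

lemma nchain_mem {x : Conf} {i : Site} {m : ℕ} {p : ℕ → Site} (h : NChain x i m p) :
    ∀ s ≤ m, p s ∈ Clu x i := by
  intro s hs
  exact ⟨s, p, ⟨h.1, fun t ht => h.2.1 t (le_trans ht hs),
    fun t ht => h.2.2 t (lt_of_lt_of_le ht hs)⟩, rfl⟩

lemma clu_extend {x : Conf} {i c s : Site} (hc : c ∈ Clu x i)
    (h1 : L1dist s c = 1) (h2 : x s = false) : s ∈ Clu x i := by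
  obtain ⟨m, p, hp, hpm⟩ := hc
  refine ⟨m + 1, fun t => if t ≤ m then p t else s, ⟨?_, ?_, ?_⟩, ?_⟩
  · simp only [Nat.zero_le, if_pos]; exact hp.1
  · intro t ht
    by_cases h : t ≤ m
    · simp only [if_pos h]; exact hp.2.1 t h
    · simp only [if_neg h]; exact h2
  · intro t ht
    by_cases h : t < m
    · simp only [if_pos (le_of_lt h), if_pos (by omega : t + 1 ≤ m)]
      exact hp.2.2 t h
    · have ht' : t = m := by omega
      simp only [if_pos (by omega : t ≤ m), if_neg (by omega : ¬ t + 1 ≤ m)]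
      rw [ht', hpm, L1dist_comm]; exact h1
  · simp only [if_neg (by omega : ¬ m + 1 ≤ m)]

lemma nchain_dist {x : Conf} {i : Site} {m : ℕ} {p : ℕ → Site} (h : NChain x i m p) :
    ∀ t ≤ m, L1dist (p t) i ≤ (t : ℤ) + 1 := by
  intro t
  induction t with
  | zero => intro _; simpa using le_of_eq h.1
  | succ t ih =>
    intro ht
    have h1 := ih (by omega)
    have h2 := h.2.2 t (by omega)
    have h3 := L1dist_triangle (p (t+1)) (p t) i
    rw [L1dist_comm] at h2
    push_cast
    linarith

/-- Key loop-erasure lemma: if there is no all-false self-avoiding path of length `n`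
starting next to `i`, then every cluster point is reached by a short chain. -/
lemma exists_short_chain {x : Conf} {i : Site} {n : ℕ} (hn : 1 ≤ n)
    (hyp : ¬ ∃ p : Fin n → Site, IsSAPath p ∧ L1dist (p ⟨0, hn⟩) i = 1 ∧ ∀ k, x (p k) = false)
    {c : Site} (hc : c ∈ Clu x i) :
    ∃ m p, NChain x i m p ∧ p m = c ∧ m + 1 < n := by
  classical
  have hex : ∃ m, ∃ p, NChain x i m p ∧ p m = c := hc
  obtain ⟨p, hp, hpc⟩ := Nat.find_spec hex
  set M := Nat.find hex with hM
  have key : ∀ j k, j < k → k ≤ M → L1dist (p j) (p k) = 1 → k = j + 1 := by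
    intro j k hjk hkM hdist
    by_contra hne
    have hk2 : j + 2 ≤ k := by omega
    set d := k - j - 1 with hd
    have hm'lt : M - d < M := by omega
    refine Nat.find_min hex hm'lt ⟨fun t => if t ≤ j then p t else p (t + d), ⟨?_, ?_, ?_⟩, ?_⟩
    · simp only [Nat.zero_le, if_pos]; exact hp.1
    · intro t ht
      by_cases h : t ≤ j
      · simp only [if_pos h]; exact hp.2.1 t (by omega)
      · simp only [if_neg h]; exact hp.2.1 _ (by omega)
    · intro t ht
      rcases lt_trichotomy t j with h | h | h
      · simp only [if_pos (le_of_lt h), if_pos (by omega : t + 1 ≤ j)]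
        exact hp.2.2 t (by omega)
      · subst h
        simp only [if_pos (le_refl t), if_neg (by omega : ¬ t + 1 ≤ t)]
        have : t + 1 + d = k := by omega
        rw [this]; exact hdist
      · simp only [if_neg (by omega : ¬ t ≤ j), if_neg (by omega : ¬ t + 1 ≤ j)]
        have : t + 1 + d = t + d + 1 := by omega
        rw [this]; exact hp.2.2 (t + d) (by omega)
    · simp only [if_neg (by omega : ¬ M - d ≤ j)]
      have : M - d + d = M := by omega
      rw [this]; exact hpc
  have hMn : M + 1 < n := by
    by_contra hge
    push_neg at hge
    apply hyp
    refine ⟨fun t => p t.val, ?_, hp.1, fun k => hp.2.1 k.val (by omega)⟩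
    intro j k
    rw [fin_abs]
    constructor
    · intro hd
      rcases lt_trichotomy j.val k.val with h | h | h
      · exact Or.inr (key j.val k.val h (by omega) hd)
      · exfalso
        have : (j : Fin n) = k := Fin.ext h
        rw [this, L1dist_self] at hd; exact absurd hd (by norm_num)
      · rw [L1dist_comm] at hd
        exact Or.inl (key k.val j.val h (by omega) hd)
    · rintro (h | h)
      · rw [L1dist_comm]
        have := hp.2.2 k.val (by omega)
        rwa [← h] at this
      · have := hp.2.2 j.val (by omega)
        rwa [← h] at this
  exact ⟨M, p, hp, hpc, hMn⟩

/-! ### The context set built from the cluster -/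

lemma ball_finite (i : Site) (n : ℤ) : {s : Site | L1dist s i ≤ n}.Finite := by
  apply Set.Finite.subset ((Set.finite_Icc (i.1 - n) (i.1 + n)).prod
    (Set.finite_Icc (i.2 - n) (i.2 + n)))
  intro s hs
  simp only [Set.mem_setOf_eq, L1dist] at hs
  have h1 : |s.1 - i.1| ≤ n := by have := abs_nonneg (s.2 - i.2); linarith
  have h2 : |s.2 - i.2| ≤ n := by have := abs_nonneg (s.1 - i.1); linarith
  rw [abs_le] at h1 h2
  exact ⟨Set.mem_Icc.2 (by omega), Set.mem_Icc.2 (by omega)⟩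

/-- The context set: `i`, its neighbors, the cluster, and the cluster's neighbors. -/
def Ctx (x : Conf) (i : Site) : Set Site :=
  {s | s = i ∨ L1dist s i = 1 ∨ s ∈ Clu x i ∨ ∃ c ∈ Clu x i, L1dist s c = 1}

lemma ctx_false_mem {x : Conf} {i : Site} {j : Site} (hj : j ∈ Ctx x i)
    (hfalse : x j = false) : j = i ∨ j ∈ Clu x i := by
  rcases hj with h | h | h | ⟨c, hc, hd⟩
  · exact Or.inl h
  · exact Or.inr (clu_base h hfalse)
  · exact Or.inr h
  · exact Or.inr (clu_extend hc hd hfalse)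

lemma ctx_nbhd_i {x : Conf} {i k : Site} (h : L1dist i k = 1) : k ∈ Ctx x i :=
  Or.inr (Or.inl (by rw [L1dist_comm]; exact h))

lemma ctx_nbhd_clu {x : Conf} {i j k : Site} (hj : j ∈ Clu x i) (h : L1dist j k = 1) :
    k ∈ Ctx x i :=
  Or.inr (Or.inr (Or.inr ⟨j, hj, by rw [L1dist_comm]; exact h⟩))

lemma ctx_i_mem {x : Conf} {i : Site} : i ∈ Ctx x i := Or.inl rfl

lemma ctx_i_intr {x : Conf} {i : Site} : i ∈ intr (Ctx x i) := by
  refine ⟨ctx_i_mem, ?_⟩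
  rintro ⟨-, k, hk, hd⟩
  exact hk (ctx_nbhd_i hd)

lemma ctx_bdry_true {x : Conf} {i : Site} : ∀ j ∈ bdry (Ctx x i), x j = true := by
  rintro j ⟨hjF, k, hkF, hjk⟩
  by_contra h
  rw [Bool.not_eq_true] at h
  rcases ctx_false_mem hjF h with rfl | hjC
  · exact hkF (ctx_nbhd_i hjk)
  · exact hkF (ctx_nbhd_clu hjC hjk)

/-- Every point of the context is joined to `i` inside the context. -/
lemma ctx_chain_to_i {x : Conf} {i : Site} :
    ∀ a ∈ Ctx x i, ∃ m, ∃ p : ℕ → Site, p 0 = i ∧ p m = a ∧ (∀ t ≤ m, p t ∈ Ctx x i) ∧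
      ∀ t < m, L1dist (p t) (p (t+1)) = 1 := by
  have hclu : ∀ a ∈ Clu x i, ∃ m, ∃ p : ℕ → Site, p 0 = i ∧ p m = a ∧
      (∀ t ≤ m, p t ∈ Ctx x i) ∧ ∀ t < m, L1dist (p t) (p (t+1)) = 1 := by
    rintro a ⟨m, p, hp, hpm⟩
    refine ⟨m + 1, fun t => if t = 0 then i else p (t - 1), by simp, ?_, ?_, ?_⟩
    · simp only [if_neg (by omega : ¬ m + 1 = 0)]
      simpa using hpm
    · intro t ht
      by_cases h : t = 0
      · simp only [if_pos h]; exact ctx_i_mem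
      · simp only [if_neg h]
        exact Or.inr (Or.inr (Or.inl (nchain_mem hp (t - 1) (by omega))))
    · intro t ht
      by_cases h : t = 0
      · subst h
        simp only [if_pos rfl, if_neg (by omega : ¬ (0:ℕ) + 1 = 0)]
        simpa [L1dist_comm] using hp.1
      · simp only [if_neg h, if_neg (by omega : ¬ t + 1 = 0)]
        rw [show t + 1 - 1 = (t - 1) + 1 by omega]
        exact hp.2.2 (t - 1) (by omega)
  rintro a (rfl | hd | hC | ⟨c, hc, hd⟩)
  · exact ⟨0, fun _ => a, rfl, rfl, fun t _ => ctx_i_mem, fun t ht => absurd ht (by omega)⟩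
  · refine ⟨1, fun t => if t = 0 then i else a, by simp, by simp, ?_, ?_⟩
    · intro t _
      by_cases h : t = 0
      · simp only [if_pos h]; exact ctx_i_mem
      · simp only [if_neg h]; exact Or.inr (Or.inl hd)
    · intro t ht
      have : t = 0 := by omega
      subst this
      simp only [if_pos rfl, if_neg (by omega : ¬ (0:ℕ) + 1 = 0)]
      rw [L1dist_comm]; exact hd
  · exact hclu a hC
  · obtain ⟨m, p, h0, hm, hmem, hstep⟩ := hclu c hc
    refine ⟨m + 1, fun t => if t ≤ m then p t else a, ?_, ?_, ?_, ?_⟩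
    · simp only [Nat.zero_le, if_pos]; exact h0
    · simp only [if_neg (by omega : ¬ m + 1 ≤ m)]
    · intro t ht
      by_cases h : t ≤ m
      · simp only [if_pos h]; exact hmem t h
      · simp only [if_neg h]
        exact Or.inr (Or.inr (Or.inr ⟨c, hc, hd⟩))
    · intro t ht
      by_cases h : t < m
      · simp only [if_pos (le_of_lt h), if_pos (by omega : t + 1 ≤ m)]
        exact hstep t h
      · have : t = m := by omega
        subst this
        simp only [if_pos (le_refl t), if_neg (by omega : ¬ t + 1 ≤ t)]
        rw [hm, L1dist_comm]; exact hd

lemma ctx_connected {x : Conf} {i : Site} : L1Connected (Ctx x i) := by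
  intro a ha b hb _
  obtain ⟨m₁, p, hp0, hpm, hpmem, hpstep⟩ := ctx_chain_to_i a ha
  obtain ⟨m₂, q, hq0, hqm, hqmem, hqstep⟩ := ctx_chain_to_i b hb
  refine ⟨m₁ + m₂, fun t => if t.val ≤ m₁ then p (m₁ - t.val) else q (t.val - m₁),
    ?_, ?_, ?_, ?_⟩
  · simp only [Fin.val_zero, Nat.zero_le, if_pos, Nat.sub_zero]; exact hpm
  · simp only [Fin.val_last]
    by_cases h : m₂ = 0
    · subst h
      simp only [if_pos (by omega : m₁ + 0 ≤ m₁)]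
      rw [show m₁ - (m₁ + 0) = 0 by omega, hp0, ← hq0, ← hqm]
    · simp only [if_neg (by omega : ¬ m₁ + m₂ ≤ m₁)]
      rw [show m₁ + m₂ - m₁ = m₂ by omega, hqm]
  · intro k
    by_cases h : k.val ≤ m₁
    · simp only [if_pos h]; exact hpmem _ (by omega)
    · simp only [if_neg h]; exact hqmem _ (by omega)
  · intro k
    have hk := k.isLt
    simp only [Fin.coe_castSucc, Fin.val_succ]
    rcases lt_trichotomy k.val m₁ with h | h | h
    · simp only [if_pos (le_of_lt h), if_pos (by omega : k.val + 1 ≤ m₁)]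
      rw [show m₁ - k.val = (m₁ - (k.val + 1)) + 1 by omega, L1dist_comm]
      exact hpstep _ (by omega)
    · have hm2 : 0 < m₂ := by omega
      simp only [if_pos (le_of_eq h), if_neg (by omega : ¬ k.val + 1 ≤ m₁)]
      rw [show m₁ - k.val = 0 by omega, show k.val + 1 - m₁ = 1 by omega, hp0, ← hq0]
      exact hqstep 0 hm2
    · simp only [if_neg (by omega : ¬ k.val ≤ m₁), if_neg (by omega : ¬ k.val + 1 ≤ m₁)]
      rw [show k.val + 1 - m₁ = (k.val - m₁) + 1 by omega]
      exact hqstep _ (by omega)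

theorem statement6 (x : Conf) (i : Site) :
    HasFiniteContext x i ↔
      ∃ (n : ℕ) (hn : 1 ≤ n), ¬ ∃ p : Fin n → Site, IsSAPath p ∧
        L1dist (p ⟨0, hn⟩) i = 1 ∧ ∀ k, x (p k) = false := by
  constructor
  · rintro ⟨F, hFin, -, hiF, hbd⟩
    refine ⟨hFin.toFinset.card + 4, by omega, ?_⟩
    rintro ⟨p, hSA, hstart, hfalse⟩
    have hmem : ∀ k : Fin (hFin.toFinset.card + 4), p k ∈ F := by
      suffices h : ∀ m (hm : m < hFin.toFinset.card + 4), p ⟨m, hm⟩ ∈ intr F by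
        intro k; exact (h k.val k.isLt).1
      intro m
      induction m with
      | zero =>
        intro hm
        have h0 : p ⟨0, hm⟩ ∈ F := by
          by_contra hout
          exact hiF.2 ⟨hiF.1, p ⟨0, hm⟩, hout, by rw [L1dist_comm]; exact hstart⟩
        refine ⟨h0, fun hb => ?_⟩
        have h2 := hfalse ⟨0, hm⟩
        rw [hbd _ hb] at h2
        exact absurd h2 (by decide)
      | succ m ih =>
        intro hm
        have hm' : m < hFin.toFinset.card + 4 := by omega
        obtain ⟨hpF, hnb⟩ := ih hm'
        have hadj : L1dist (p ⟨m, hm'⟩) (p ⟨m+1, hm⟩) = 1 :=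
          (hSA _ _).mpr ((fin_abs _ _).mpr (Or.inr rfl))
        have hF1 : p ⟨m+1, hm⟩ ∈ F := by
          by_contra hout
          exact hnb ⟨hpF, p ⟨m+1, hm⟩, hout, hadj⟩
        refine ⟨hF1, fun hb => ?_⟩
        have h2 := hfalse ⟨m+1, hm⟩
        rw [hbd _ hb] at h2
        exact absurd h2 (by decide)
    have hinj := sa_inj hSA (by omega)
    have hcard := Finset.card_le_card_of_injOn (s := Finset.univ) (t := hFin.toFinset) p
      (fun k _ => hFin.mem_toFinset.2 (hmem k)) (fun a _ b _ hab => hinj hab)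
    simp only [Finset.card_univ, Fintype.card_fin] at hcard
    omega
  · rintro ⟨n, hn, hyp⟩
    refine ⟨Ctx x i, ?_, ctx_connected, ctx_i_intr, ctx_bdry_true⟩
    apply Set.Finite.subset (ball_finite i ((n : ℤ) + 1))
    have hclu_ball : ∀ c ∈ Clu x i, L1dist c i ≤ (n : ℤ) := by
      intro c hC
      obtain ⟨m, q, hq, hqm, hlt⟩ := exists_short_chain hn hyp hC
      have hd := nchain_dist hq m le_rfl
      rw [hqm] at hd
      have : (m : ℤ) + 1 ≤ (n : ℤ) := by exact_mod_cast Nat.lt_iff_add_one_le.mp (by omega)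
      linarith
    rintro s (rfl | hd | hC | ⟨c, hc, hd⟩) <;> simp only [Set.mem_setOf_eq]
    · rw [L1dist_self]; positivity
    · rw [hd]; have : (0:ℤ) ≤ n := by positivity
      linarith
    · have := hclu_ball s hC; linarith
    · have h1 := hclu_ball c hc
      have h2 := L1dist_triangle s c i
      linarith
end
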